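/- SCR reduction preserves types (subject reduction): if e : σ and e ⇒ e′ by any of the basic reduction rules or congruence closure, then e′ : σ. -/
import Mathlib


/-- Types of Stratified Combinatory ReFLect: unit, (σ)term, arrows. -/
inductive STy : Type
  | unit
  | term : STy → STy
  | arrow : STy → STy → STy
deriving DecidableEq

inductive SExp : Type
  | I : STy → SExp
  | K : STy → STy → SExp
  | S : STy → STy → STy → SExp
  | value : STy → SExp
  | lift : STy → SExp
  | app : STy → STy → SExp
  | ap : SExp → SExp → SExp
  | quot : SExp → SExp
deriving DecidableEq

/-- Typing rules of SCR. -/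
inductive SHasType : SExp → STy → Prop
  | I (σ) : SHasType (.I σ) (.arrow σ σ)
  | K (σ τ) : SHasType (.K σ τ) (.arrow σ (.arrow τ σ))
  | S (σ τ υ) : SHasType (.S σ τ υ)
      (.arrow (.arrow σ (.arrow τ υ)) (.arrow (.arrow σ τ) (.arrow σ υ)))
  | value (σ) : SHasType (.value σ) (.arrow (.term σ) σ)
  | lift (σ) : SHasType (.lift σ) (.arrow (.term σ) (.term (.term σ)))
  | app (σ τ) : SHasType (.app σ τ)
      (.arrow (.term (.arrow σ τ)) (.arrow (.term σ) (.term τ)))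
  | ap {e₁ e₂ σ τ} : SHasType e₁ (.arrow σ τ) → SHasType e₂ σ → SHasType (.ap e₁ e₂) τ
  | quot {e σ} : SHasType e σ → SHasType (.quot e) (.term σ)

/-- Single-step reduction of SCR, closed under congruence. -/
inductive SStep : SExp → SExp → Prop
  | I {σ e} : SStep (.ap (.I σ) e) e
  | K {σ τ e₁ e₂} : SStep (.ap (.ap (.K σ τ) e₁) e₂) e₁
  | S {σ τ υ e₁ e₂ e₃} :
      SStep (.ap (.ap (.ap (.S σ τ υ) e₁) e₂) e₃) (.ap (.ap e₁ e₃) (.ap e₂ e₃))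
  | value {σ e} : SHasType e σ → SStep (.ap (.value σ) (.quot e)) e
  | lift {σ e} : SStep (.ap (.lift σ) (.quot e)) (.quot (.quot e))
  | app {σ τ e₁ e₂} : SHasType (.ap e₁ e₂) τ →
      SStep (.ap (.ap (.app σ τ) (.quot e₁)) (.quot e₂)) (.quot (.ap e₁ e₂))
  | apL {a a' b} : SStep a a' → SStep (.ap a b) (.ap a' b)
  | apR {a b b'} : SStep b b' → SStep (.ap a b) (.ap a b')

/-- subject reduction for SCR. -/
theorem scr_subject_reduction {e e' : SExp} {σ : STy}
    (ht : SHasType e σ) (hs : SStep e e') : SHasType e' σ := by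
  induction hs generalizing σ with
  | I =>
      rcases ht with _|_|_|_|_|_|⟨hI, he⟩
      rcases hI; exact he
  | K =>
      rcases ht with _|_|_|_|_|_|⟨hK1, he2⟩
      rcases hK1 with _|_|_|_|_|_|⟨hK, he1⟩
      rcases hK; exact he1
  | S =>
      rcases ht with _|_|_|_|_|_|⟨h1, he3⟩
      rcases h1 with _|_|_|_|_|_|⟨h2, he2⟩
      rcases h2 with _|_|_|_|_|_|⟨hS, he1⟩
      rcases hS
      exact .ap (.ap he1 he3) (.ap he2 he3)
  | value h =>
      rcases ht with _|_|_|_|_|_|⟨hv, hq⟩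
      rcases hv; rcases hq with _|_|_|_|_|_|_|he
      exact he
  | lift =>
      rcases ht with _|_|_|_|_|_|⟨hl, hq⟩
      rcases hl; rcases hq with _|_|_|_|_|_|_|he
      exact .quot (.quot he)
  | app h =>
      rcases ht with _|_|_|_|_|_|⟨h1, hq2⟩
      rcases h1 with _|_|_|_|_|_|⟨ha, hq1⟩
      rcases ha
      rcases hq1 with _|_|_|_|_|_|_|he1
      rcases hq2 with _|_|_|_|_|_|_|he2
      exact .quot (.ap he1 he2)
  | apL _ ih =>
      rcases ht with _|_|_|_|_|_|⟨h1, h2⟩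
      exact .ap (ih h1) h2
  | apR _ ih =>
      rcases ht with _|_|_|_|_|_|⟨h1, h2⟩
      exact .ap h1 (ih h2)
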